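/- arXiv:2002.10109 — 2 statements merged into one kernel-verified Lean document; each statement's English description precedes it below -/
import Mathlib

section
/- (Vizing's Adjacency Lemma, part (a)) Let G be a Δ-critical graph and let u and v be adjacent vertices of G with d(v) = k. If k < Δ, then u is adjacent to at least Δ − k + 1 vertices of degree Δ. -/
open SimpleGraph Finset

variable {V : Type*}

/-- `G` has a `K₅` minor: five pairwise disjoint nonempty connected branch sets,
pairwise joined by an edge of `G`. -/
def SimpleGraph.HasK5Minor (G : SimpleGraph V) : Prop :=
  ∃ S : Fin 5 → Set V,
    (∀ i, (S i).Nonempty) ∧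
    (∀ i, (G.induce (S i)).Connected) ∧
    (∀ i j, i ≠ j → Disjoint (S i) (S j)) ∧
    (∀ i j, i ≠ j → ∃ u ∈ S i, ∃ v ∈ S j, G.Adj u v)

/-- The chromatic index of `G`, as the chromatic number of its line graph. -/
noncomputable def SimpleGraph.chromaticIndex (G : SimpleGraph V) : ℕ∞ :=
  G.lineGraph.chromaticNumber

/-- `G` is a `Δ`-critical graph (`Δ = G.maxDegree`): it is connected and class 2,
and deleting any edge decreases the chromatic index. -/
def SimpleGraph.IsDeltaCritical [Fintype V] (G : SimpleGraph V) [DecidableRel G.Adj] : Prop :=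
  G.Connected ∧ G.chromaticIndex = (G.maxDegree : ℕ∞) + 1 ∧
    ∀ e ∈ G.edgeSet, (G.deleteEdges {e}).chromaticIndex < G.chromaticIndex

/-- The neighborhood `N(X)` of a set of vertices `X`. -/
def SimpleGraph.setNbhd (G : SimpleGraph V) (X : Set V) : Set V :=
  {v | v ∉ X ∧ ∃ u ∈ X, G.Adj u v}

/-!
Colour `G - uv` with `Δ` colours and call `x` a fan vertex if it is reached from `v` by a sequence
of distinct neighbours of `u` in which each edge `u z` carries a colour missing at the previous
vertex. A colour missing at a fan vertex is present at `u`, for otherwise shifting colours along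
the fan would colour `G`; and no colour is missing at two distinct fan vertices, for otherwise a
Kempe change on an (α, γ)-chain, with α missing at `u`, reduces to the first case. So every colour
missing at a fan vertex labels an edge from `u` to another fan vertex, and the numbers of missing
colours summed over the fan are at most the number of fan vertices other than `v`. Since `v`
misses at least `Δ - k + 1` colours and every fan vertex of degree below `Δ` misses at least one,
at least `Δ - k + 1` fan vertices have degree `Δ`.
-/

namespace SimpleGraph

lemma Connected.card_degree_le_one_le_two [Fintype V] {G : SimpleGraph V} [DecidableRel G.Adj]
    (hG : G.Connected) (hdeg : ∀ x, G.degree x ≤ 2) : #{x | G.degree x ≤ 1} ≤ 2 := by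
  -- `2 (|V| - 1) ≤ 2 |E| = ∑ deg ≤ 2 |V| - #{x | deg x ≤ 1}`
  have hedges := hG.card_vert_le_card_edgeSet_add_one
  rw [Nat.card_eq_fintype_card, Nat.card_eq_fintype_card, ← edgeFinset_card] at hedges
  have hsum : ∑ x, G.degree x + #{x | G.degree x ≤ 1} ≤ ∑ _x : V, 2 := by
    rw [card_filter, ← sum_add_distrib]
    exact sum_le_sum fun x _ => by have := hdeg x; split_ifs <;> omega
  rw [sum_degrees_eq_twice_card_edges, sum_const, card_univ, smul_eq_mul] at hsum
  omega

lemma not_reachable_of_reachable_of_degree_le_one [Fintype V] {G : SimpleGraph V}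
    [DecidableRel G.Adj] (hdeg : ∀ x, G.degree x ≤ 2) {a b t : V} (hab : a ≠ b) (hat : a ≠ t)
    (hbt : b ≠ t) (ha : G.degree a ≤ 1) (hb : G.degree b ≤ 1) (ht : G.degree t ≤ 1)
    (hra : G.Reachable a t) : ¬ G.Reachable b t := by
  classical
  intro hrb
  set S := (G.connectedComponentMk t).supp
  have hmem : ∀ {x}, G.Reachable x t → x ∈ S := fun h => ConnectedComponent.sound h
  have hdegS : ∀ x : S, (G.induce S).degree x = G.degree x := fun x =>
    degree_induce_of_neighborSet_subset fun _ ↦ ConnectedComponent.mem_supp_of_adj_mem_supp _ x.2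
  have hsub : ({⟨a, hmem hra⟩, ⟨b, hmem hrb⟩, ⟨t, hmem (.refl t)⟩} : Finset S) ⊆
      ({x | (G.induce S).degree x ≤ 1} : Finset S) := by
    intro x hx
    simp only [mem_insert, mem_singleton] at hx
    rw [mem_filter, hdegS]
    rcases hx with rfl | rfl | rfl <;> exact ⟨mem_univ _, ‹_›⟩
  have hconn : (G.induce S).Connected := (G.connectedComponentMk t).connected_toSimpleGraph
  have := (card_le_card hsub).trans <|
    hconn.card_degree_le_one_le_two fun x => (hdegS x).trans_le (hdeg x)
  rw [card_eq_three.mpr ⟨_, _, _, Subtype.coe_ne_coe.mp hab, Subtype.coe_ne_coe.mp hat,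
    Subtype.coe_ne_coe.mp hbt, rfl⟩] at this
  omega

structure IsEdgeColoring (G : SimpleGraph V) (n : ℕ) (c : Sym2 V → ℕ) : Prop where
  lt : ∀ ⦃e⦄, e ∈ G.edgeSet → c e < n
  ne : ∀ ⦃x y z⦄, G.Adj x y → G.Adj x z → y ≠ z → c s(x, y) ≠ c s(x, z)

variable {G : SimpleGraph V} {n : ℕ} {c c' : Sym2 V → ℕ} {u v x y : V} {γ : ℕ}

theorem colorable_lineGraph_iff_exists_isEdgeColoring :
    G.lineGraph.Colorable n ↔ ∃ c, G.IsEdgeColoring n c := by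
  classical
  constructor
  · rintro ⟨C⟩
    refine ⟨fun e => if he : e ∈ G.edgeSet then C ⟨e, he⟩ else 0, fun e he => by simp [he], ?_⟩
    intro x y z hxy hxz hyz
    have hadj : G.lineGraph.Adj ⟨s(x, y), hxy⟩ ⟨s(x, z), hxz⟩ :=
      lineGraph_adj_iff_exists.mpr
        ⟨fun h => hyz (Sym2.congr_right.mp (congrArg Subtype.val h)), x, by simp, by simp⟩
    simpa [hxy, hxz, Fin.val_inj] using C.valid hadj
  · rintro ⟨c, hc⟩
    refine ⟨Coloring.mk (fun e => ⟨c e, hc.lt e.2⟩) fun {e f} hef => ?_⟩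
    obtain ⟨hne, x, hxe, hxf⟩ := lineGraph_adj_iff_exists.mp hef
    obtain ⟨y, hy⟩ := Sym2.mem_iff_exists.mp hxe
    obtain ⟨z, hz⟩ := Sym2.mem_iff_exists.mp hxf
    have hxy : G.Adj x y := G.mem_edgeSet.mp (hy ▸ e.2)
    have hxz : G.Adj x z := G.mem_edgeSet.mp (hz ▸ f.2)
    have hyz : y ≠ z := by rintro rfl; exact hne (Subtype.ext (hy.trans hz.symm))
    simpa [hy, hz] using hc.ne hxy hxz hyz

lemma deleteEdges_sup_edge (h : G.Adj u v) : G.deleteEdges {s(u, v)} ⊔ edge u v = G :=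
  sdiff_sup_cancel ((edge_le_iff (G := G)).mpr (.inr h))

lemma degree_deleteEdges_lt [Fintype V] [DecidableRel G.Adj] {e : Sym2 V}
    [DecidableRel (G.deleteEdges {e}).Adj] (he : e ∈ G.edgeSet) (hx : x ∈ e) :
    (G.deleteEdges {e}).degree x < G.degree x := by
  obtain ⟨y, rfl⟩ := Sym2.mem_iff_exists.mp hx
  rw [← card_neighborFinset_eq_degree, ← card_neighborFinset_eq_degree]
  refine card_lt_card ((ssubset_iff_of_subset fun w hw => ?_).mpr ⟨y, by simpa using he, by simp⟩)
  simp only [mem_neighborFinset, deleteEdges_adj] at hw ⊢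
  exact hw.1

def IsMissing (G : SimpleGraph V) (c : Sym2 V → ℕ) (x : V) (γ : ℕ) : Prop :=
  ∀ ⦃y⦄, G.Adj x y → c s(x, y) ≠ γ

lemma IsMissing.congr (h : ∀ ⦃y⦄, G.Adj x y → c' s(x, y) = c s(x, y))
    (hx : G.IsMissing c x γ) : G.IsMissing c' x γ :=
  fun _ hy => h hy ▸ hx hy

lemma IsEdgeColoring.update_sup_edge [DecidableEq V] (hc : G.IsEdgeColoring n c) (hγ : γ < n)
    (hx : G.IsMissing c x γ) (hy : G.IsMissing c y γ) :
    (G ⊔ edge x y).IsEdgeColoring n (Function.update c s(x, y) γ) := by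
  have hold : ∀ ⦃e⦄, e ∈ (G ⊔ edge x y).edgeSet → e ≠ s(x, y) → e ∈ G.edgeSet := by
    intro e he hne
    rw [edgeSet_sup] at he
    exact he.resolve_right fun h => hne (edgeSet_edge_subset h)
  have hend : ∀ ⦃a b⦄, s(a, b) = s(x, y) → G.IsMissing c a γ := by
    intro a b h
    rcases Sym2.mem_iff.mp (h ▸ Sym2.mem_mk_left a b) with rfl | rfl <;> assumption
  constructor
  · intro e he
    by_cases hexy : e = s(x, y)
    · simpa [hexy] using hγ
    · rw [Function.update_of_ne hexy]
      exact hc.lt (hold he hexy)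
  · intro a b b' hab hab' hbb'
    have hne : s(a, b) ≠ s(a, b') := fun h => hbb' (Sym2.congr_right.mp h)
    by_cases h : s(a, b) = s(x, y)
    · have h' : s(a, b') ≠ s(x, y) := h ▸ hne.symm
      rw [h, Function.update_self, Function.update_of_ne h']
      exact (hend h (hold hab' h')).symm
    by_cases h' : s(a, b') = s(x, y)
    · rw [h', Function.update_self, Function.update_of_ne h]
      exact hend h' (hold hab h)
    rw [Function.update_of_ne h, Function.update_of_ne h']
    exact hc.ne (hold hab h) (hold hab' h') hbb'

lemma IsEdgeColoring.update_of_adj [DecidableEq V] (hc : G.IsEdgeColoring n c) (hxy : G.Adj x y)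
    (hγ : γ < n) (hx : G.IsMissing c x γ) (hy : G.IsMissing c y γ) :
    G.IsEdgeColoring n (Function.update c s(x, y) γ) := by
  simpa [sup_edge_of_adj G hxy] using hc.update_sup_edge hγ hx hy

lemma IsEdgeColoring.isMissing_update [DecidableEq V] (hc : G.IsEdgeColoring n c)
    (hxy : G.Adj x y) (hγ : γ ≠ c s(x, y)) :
    G.IsMissing (Function.update c s(x, y) γ) x (c s(x, y)) := by
  intro z hxz
  by_cases hzy : z = y
  · simpa [hzy] using hγ
  · rw [Function.update_of_ne fun h => hzy (Sym2.congr_right.mp h)]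
    exact hc.ne hxz hxy hzy

lemma ne_of_forall_not_isEdgeColoring_sup_edge (hG : ∀ c, ¬ (G ⊔ edge u v).IsEdgeColoring n c)
    (hc : G.IsEdgeColoring n c) : u ≠ v := by
  rintro rfl
  exact hG c (by simpa using hc)

lemma not_adj_of_forall_not_isEdgeColoring_sup_edge
    (hG : ∀ c, ¬ (G ⊔ edge u v).IsEdgeColoring n c) (hc : G.IsEdgeColoring n c) : ¬ G.Adj u v :=
  fun huv => hG c (by rwa [sup_edge_of_adj G huv])

def kempeGraph (G : SimpleGraph V) (c : Sym2 V → ℕ) (α β : ℕ) : SimpleGraph V where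
  Adj x y := G.Adj x y ∧ (c s(x, y) = α ∨ c s(x, y) = β)
  symm := ⟨fun x y h => by rwa [Sym2.eq_swap, G.adj_comm]⟩
  loopless := ⟨fun x h => G.loopless.irrefl x h.1⟩

@[simp]
lemma kempeGraph_adj {α β : ℕ} :
    (G.kempeGraph c α β).Adj x y ↔ G.Adj x y ∧ (c s(x, y) = α ∨ c s(x, y) = β) :=
  Iff.rfl

open Classical in
/-- Swaps the colours `α` and `β` on the edges meeting `S`; when `S` is closed under
`G.kempeGraph c α β`, this is a Kempe change. -/
noncomputable def swapColorsOn (c : Sym2 V → ℕ) (α β : ℕ) (S : Set V) (e : Sym2 V) : ℕ :=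
  if ∃ x ∈ e, x ∈ S then Equiv.swap α β (c e) else c e

section Kempe

variable {α β δ : ℕ} {S : Set V}

lemma swapColorsOn_mk_of_mem (hx : x ∈ S) :
    swapColorsOn c α β S s(x, y) = Equiv.swap α β (c s(x, y)) :=
  if_pos ⟨x, Sym2.mem_mk_left x y, hx⟩

lemma swapColorsOn_mk_of_notMem (hS : ∀ ⦃a b⦄, (G.kempeGraph c α β).Adj a b → a ∈ S → b ∈ S)
    (hxy : G.Adj x y) (hx : x ∉ S) : swapColorsOn c α β S s(x, y) = c s(x, y) := by
  by_cases hy : y ∈ S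
  · rw [Sym2.eq_swap, swapColorsOn_mk_of_mem hy]
    refine Equiv.swap_apply_of_ne_of_ne (fun h => hx ?_) (fun h => hx ?_) <;>
      exact hS (kempeGraph_adj.mpr ⟨hxy.symm, by simp [h]⟩) hy
  · exact if_neg (by simp [hx, hy])

lemma IsEdgeColoring.swapColorsOn (hc : G.IsEdgeColoring n c) (hα : α < n) (hβ : β < n)
    (hS : ∀ ⦃a b⦄, (G.kempeGraph c α β).Adj a b → a ∈ S → b ∈ S) :
    G.IsEdgeColoring n (swapColorsOn c α β S) := by
  constructor
  · intro e he
    induction e using Sym2.ind with | _ x y => ?_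
    by_cases hx : x ∈ S
    · rw [swapColorsOn_mk_of_mem hx, Equiv.swap_apply_def]
      split_ifs <;> first | assumption | exact hc.lt he
    · rw [swapColorsOn_mk_of_notMem hS he hx]
      exact hc.lt he
  · intro x y z hxy hxz hyz
    by_cases hx : x ∈ S
    · rw [swapColorsOn_mk_of_mem hx, swapColorsOn_mk_of_mem hx]
      exact (Equiv.swap α β).injective.ne (hc.ne hxy hxz hyz)
    · rw [swapColorsOn_mk_of_notMem hS hxy hx, swapColorsOn_mk_of_notMem hS hxz hx]
      exact hc.ne hxy hxz hyz

lemma IsMissing.swapColorsOn_of_mem (hx : x ∈ S) (hm : G.IsMissing c x δ) :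
    G.IsMissing (swapColorsOn c α β S) x (Equiv.swap α β δ) := fun _ hy => by
  rw [swapColorsOn_mk_of_mem hx]
  exact (Equiv.swap α β).injective.ne (hm hy)

lemma IsMissing.swapColorsOn_of_notMem
    (hS : ∀ ⦃a b⦄, (G.kempeGraph c α β).Adj a b → a ∈ S → b ∈ S) (hx : x ∉ S)
    (hm : G.IsMissing c x δ) : G.IsMissing (swapColorsOn c α β S) x δ :=
  hm.congr fun _ hy => swapColorsOn_mk_of_notMem hS hy hx

lemma IsEdgeColoring.degree_kempeGraph_le_card (hc : G.IsEdgeColoring n c) {s : Finset ℕ}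
    [Fintype ((G.kempeGraph c α β).neighborSet x)]
    (hs : ∀ ⦃y⦄, (G.kempeGraph c α β).Adj x y → c s(x, y) ∈ s) :
    (G.kempeGraph c α β).degree x ≤ #s := by
  rw [← card_neighborFinset_eq_degree]
  refine card_le_card_of_injOn (fun y => c s(x, y))
    (fun y hy => hs ((mem_neighborFinset ..).mp hy)) ?_
  intro y hy z hz h
  by_contra hyz
  exact hc.ne (kempeGraph_adj.mp ((mem_neighborFinset ..).mp hy)).1
    (kempeGraph_adj.mp ((mem_neighborFinset ..).mp hz)).1 hyz h

lemma IsEdgeColoring.degree_kempeGraph_le_two (hc : G.IsEdgeColoring n c)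
    [Fintype ((G.kempeGraph c α β).neighborSet x)] : (G.kempeGraph c α β).degree x ≤ 2 :=
  (hc.degree_kempeGraph_le_card (s := {α, β}) fun _ ⟨_, hcol⟩ => by simpa using hcol).trans
    card_le_two

lemma IsEdgeColoring.degree_kempeGraph_le_one (hc : G.IsEdgeColoring n c)
    [Fintype ((G.kempeGraph c α β).neighborSet x)]
    (hx : G.IsMissing c x α ∨ G.IsMissing c x β) : (G.kempeGraph c α β).degree x ≤ 1 := by
  rcases hx with hx | hx
  · exact hc.degree_kempeGraph_le_card (s := {β}) fun _ ⟨hxy, hcol⟩ => by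
      simpa using hcol.resolve_left (hx hxy)
  · exact hc.degree_kempeGraph_le_card (s := {α}) fun _ ⟨hxy, hcol⟩ => by
      simpa using hcol.resolve_right (hx hxy)

end Kempe

/-- `G.IsFan c u v P x`: the list `P` enumerates a fan at `u` from `v` to `x`, each new vertex `z`
being a neighbour of `u` such that `c s(u, z)` is missing at the previous vertex. In use, `u v` is
the uncoloured edge, so `v` need not be a neighbour of `u` in `G`. -/
inductive IsFan (G : SimpleGraph V) (c : Sym2 V → ℕ) (u v : V) : List V → V → Prop
  | single : G.IsFan c u v [v] v
  | snoc {P : List V} {x z : V} {γ : ℕ} : G.IsFan c u v P x → G.IsMissing c x γ → G.Adj u z →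
      c s(u, z) = γ → z ∉ P → G.IsFan c u v (P ++ [z]) z

namespace IsFan

variable {P : List V}

lemma last_mem (hf : G.IsFan c u v P x) : x ∈ P := by
  cases hf <;> simp

lemma eq_or_adj_of_mem (hf : G.IsFan c u v P x) (hy : y ∈ P) : y = v ∨ G.Adj u y := by
  induction hf with
  | single => exact .inl (List.mem_singleton.mp hy)
  | snoc _ _ huz _ _ ih =>
    rcases List.mem_append.mp hy with hy | hy
    exacts [ih hy, .inr (List.mem_singleton.mp hy ▸ huz)]

lemma exists_of_mem (hf : G.IsFan c u v P x) (hy : y ∈ P) : ∃ Q, G.IsFan c u v Q y := by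
  induction hf with
  | single => exact ⟨[v], List.mem_singleton.mp hy ▸ .single⟩
  | snoc hf hx huz hcz hz ih =>
    rcases List.mem_append.mp hy with hy | hy
    exacts [ih hy, ⟨_, List.mem_singleton.mp hy ▸ hf.snoc hx huz hcz hz⟩]

lemma exists_of_adj (hf : G.IsFan c u v P x) (hx : G.IsMissing c x γ) (huy : G.Adj u y)
    (hcy : c s(u, y) = γ) : ∃ Q, G.IsFan c u v Q y := by
  by_cases hy : y ∈ P
  exacts [hf.exists_of_mem hy, ⟨_, hf.snoc hx huy hcy hy⟩]

lemma congr (hf : G.IsFan c u v P x)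
    (h : ∀ y ∈ P, ∀ ⦃w⦄, G.Adj y w → c' s(y, w) = c s(y, w)) : G.IsFan c' u v P x := by
  induction hf with
  | single => exact .single
  | @snoc P x z γ hf hx huz hcz hz ih =>
    have h' : ∀ y ∈ P, ∀ ⦃w⦄, G.Adj y w → c' s(y, w) = c s(y, w) :=
      fun y hy => h y (List.mem_append_left _ hy)
    refine (ih h').snoc (hx.congr (h' x hf.last_mem)) huz ?_ hz
    rw [Sym2.eq_swap, h z (by simp) huz.symm, Sym2.eq_swap, hcz]

lemma ne_of_mem (huv : u ≠ v) (hf : G.IsFan c u v P x) (hy : y ∈ P) : y ≠ u := by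
  rcases hf.eq_or_adj_of_mem hy with rfl | huy
  exacts [huv.symm, huy.ne.symm]

theorem not_isMissing_center (hG : ∀ c, ¬ (G ⊔ edge u v).IsEdgeColoring n c)
    {c : Sym2 V → ℕ} {P : List V} {x : V} {γ : ℕ} (hc : G.IsEdgeColoring n c)
    (hf : G.IsFan c u v P x) (hγ : γ < n) (hx : G.IsMissing c x γ) : ¬ G.IsMissing c u γ := by
  classical
  intro hu
  cases hf with
  | single => exact hG _ (hc.update_sup_edge hγ hu hx)
  | @snoc Q y _ β hf hy huz hcz hz =>
    by_cases hβ : β = γ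
    · exact IsFan.not_isMissing_center hG hc hf hγ (hβ ▸ hy) hu
    -- Recolour `u x` with `γ`: the shorter fan is untouched and `β` is now missing at `u`.
    have hagree : ∀ w ∈ Q, ∀ ⦃w'⦄, G.Adj w w' →
        Function.update c s(u, x) γ s(w, w') = c s(w, w') := by
      intro w hw w' _
      refine Function.update_of_ne (fun h => ?_) _ _
      rcases Sym2.mem_iff.mp (h ▸ Sym2.mem_mk_left w w') with rfl | rfl
      exacts [hf.ne_of_mem (ne_of_forall_not_isEdgeColoring_sup_edge hG hc) hw rfl, hz hw]
    have hu' := hc.isMissing_update huz (hcz ▸ Ne.symm hβ)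
    rw [hcz] at hu'
    exact IsFan.not_isMissing_center hG (hc.update_of_adj huz hγ hu hx) (hf.congr hagree)
      (hcz ▸ hc.lt huz) (hy.congr (hagree y hf.last_mem)) hu'
termination_by P.length

variable {α : ℕ} {S : Set V}

lemma swapColorsOn_of_notMem (hG : ∀ c, ¬ (G ⊔ edge u v).IsEdgeColoring n c)
    (hc : G.IsEdgeColoring n c) (hα : α < n) (hγ : γ < n) (huα : G.IsMissing c u α)
    (hS : ∀ ⦃a b⦄, (G.kempeGraph c α γ).Adj a b → a ∈ S → b ∈ S) (hu : u ∉ S)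
    (hf : G.IsFan c u v P x) : G.IsFan (swapColorsOn c α γ S) u v P x := by
  have hc' := hc.swapColorsOn hα hγ hS
  have huα' := huα.swapColorsOn_of_notMem hS hu
  induction hf with
  | single => exact .single
  | @snoc P y z β hf hy huz hcz hz ih =>
    refine ih.snoc ?_ huz (by rw [swapColorsOn_mk_of_notMem hS huz hu, hcz]) hz
    by_cases hyS : y ∈ S
    · have hy' := hy.swapColorsOn_of_mem (α := α) (β := γ) hyS
      by_cases hβα : β = α
      · exact absurd huα (not_isMissing_center hG hc hf hα (hβα ▸ hy))
      by_cases hβγ : β = γ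
      · rw [hβγ, Equiv.swap_apply_right] at hy'
        exact absurd huα' (not_isMissing_center hG hc' ih hα hy')
      · rwa [Equiv.swap_apply_of_ne_of_ne hβα hβγ] at hy'
    · exact hy.swapColorsOn_of_notMem hS hyS

lemma reachable_kempeGraph (hG : ∀ c, ¬ (G ⊔ edge u v).IsEdgeColoring n c)
    (hc : G.IsEdgeColoring n c) (hα : α < n) (hγ : γ < n) (huα : G.IsMissing c u α)
    (hf : G.IsFan c u v P x) (hx : G.IsMissing c x γ) : (G.kempeGraph c α γ).Reachable x u := by
  by_contra hxu
  set S := ((G.kempeGraph c α γ).connectedComponentMk x).supp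
  have hS : ∀ ⦃a b⦄, (G.kempeGraph c α γ).Adj a b → a ∈ S → b ∈ S :=
    fun _ _ hab ha => ConnectedComponent.mem_supp_of_adj_mem_supp _ ha hab
  have hu : u ∉ S := fun hu => hxu (ConnectedComponent.exact hu).symm
  have hxS : x ∈ S := ConnectedComponent.connectedComponentMk_mem
  have hx' := hx.swapColorsOn_of_mem (α := α) (β := γ) hxS
  rw [Equiv.swap_apply_right] at hx'
  exact not_isMissing_center hG (hc.swapColorsOn hα hγ hS)
    (hf.swapColorsOn_of_notMem hG hc hα hγ huα hS hu) hα hx' (huα.swapColorsOn_of_notMem hS hu)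

theorem eq_of_isMissing [Fintype V] (hG : ∀ c, ¬ (G ⊔ edge u v).IsEdgeColoring n c)
    (hc : G.IsEdgeColoring n c) (hα : α < n) (huα : G.IsMissing c u α) {Q : List V} {y : V}
    (hx : G.IsFan c u v P x) (hy : G.IsFan c u v Q y) (hγ : γ < n)
    (hxγ : G.IsMissing c x γ) (hyγ : G.IsMissing c y γ) : x = y := by
  classical
  by_contra hxy
  have huv := ne_of_forall_not_isEdgeColoring_sup_edge hG hc
  exact not_reachable_of_reachable_of_degree_le_one (fun _ => hc.degree_kempeGraph_le_two) hxy
    (hx.ne_of_mem huv hx.last_mem) (hy.ne_of_mem huv hy.last_mem)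
    (hc.degree_kempeGraph_le_one (.inr hxγ)) (hc.degree_kempeGraph_le_one (.inr hyγ))
    (hc.degree_kempeGraph_le_one (.inl huα)) (hx.reachable_kempeGraph hG hc hα hγ huα hxγ)
    (hy.reachable_kempeGraph hG hc hα hγ huα hyγ)

end IsFan

open Classical in
noncomputable def missingColors (G : SimpleGraph V) (n : ℕ) (c : Sym2 V → ℕ) (x : V) :
    Finset ℕ :=
  {δ ∈ range n | G.IsMissing c x δ}

open Classical in
noncomputable def fanVertices [Fintype V] (G : SimpleGraph V) (c : Sym2 V → ℕ) (u v : V) :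
    Finset V :=
  {x | ∃ P, G.IsFan c u v P x}

section Counting

variable {α δ : ℕ}

lemma mem_missingColors : δ ∈ G.missingColors n c x ↔ δ < n ∧ G.IsMissing c x δ := by
  simp [missingColors]

lemma mem_fanVertices [Fintype V] : x ∈ G.fanVertices c u v ↔ ∃ P, G.IsFan c u v P x := by
  simp [fanVertices]

lemma sub_degree_le_card_missingColors [Fintype (G.neighborSet x)] :
    n - G.degree x ≤ #(G.missingColors n c x) := by
  set used := (G.neighborFinset x).image fun y => c s(x, y)
  calc n - G.degree x ≤ n - #used := by
        gcongr
        exact card_image_le.trans (card_neighborFinset_eq_degree ..).le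
    _ ≤ #(range n \ used) := by simpa using le_card_sdiff used (range n)
    _ ≤ #(G.missingColors n c x) := card_le_card fun δ hδ => by
        simp only [used, mem_sdiff, mem_range, mem_image, mem_neighborFinset, not_exists,
          not_and] at hδ
        exact mem_missingColors.mpr ⟨hδ.1, fun y hy => hδ.2 y hy⟩

theorem sum_card_missingColors_fanVertices_le [Fintype V] [DecidableEq V]
    (hG : ∀ c, ¬ (G ⊔ edge u v).IsEdgeColoring n c) (hc : G.IsEdgeColoring n c) (hα : α < n)
    (huα : G.IsMissing c u α) :
    ∑ x ∈ G.fanVertices c u v, #(G.missingColors n c x) ≤ #((G.fanVertices c u v).erase v) := by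
  set F := G.fanVertices c u v
  have hdisj : (F : Set V).PairwiseDisjoint (G.missingColors n c) := by
    intro x hx y hy hxy
    refine Finset.disjoint_left.mpr fun δ hδx hδy => hxy ?_
    obtain ⟨P, hP⟩ := mem_fanVertices.mp hx
    obtain ⟨Q, hQ⟩ := mem_fanVertices.mp hy
    obtain ⟨hδ, hxδ⟩ := mem_missingColors.mp hδx
    exact hP.eq_of_isMissing hG hc hα huα hQ hδ hxδ (mem_missingColors.mp hδy).2
  have hcover : F.biUnion (G.missingColors n c) ⊆ (F.erase v).image fun w => c s(u, w) := by
    intro δ hδ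
    obtain ⟨x, hx, hδx⟩ := mem_biUnion.mp hδ
    obtain ⟨P, hP⟩ := mem_fanVertices.mp hx
    obtain ⟨hδ, hxδ⟩ := mem_missingColors.mp hδx
    obtain ⟨w, huw, rfl⟩ : ∃ w, G.Adj u w ∧ c s(u, w) = δ := by
      simpa [IsMissing] using hP.not_isMissing_center hG hc hδ hxδ
    refine mem_image_of_mem _
      (mem_erase.mpr ⟨?_, mem_fanVertices.mpr (hP.exists_of_adj hxδ huw rfl)⟩)
    rintro rfl
    exact not_adj_of_forall_not_isEdgeColoring_sup_edge hG hc huw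
  calc ∑ x ∈ F, #(G.missingColors n c x) = #(F.biUnion (G.missingColors n c)) :=
        (card_biUnion hdisj).symm
    _ ≤ #((F.erase v).image fun w => c s(u, w)) := card_le_card hcover
    _ ≤ #(F.erase v) := card_image_le

theorem sub_degree_add_one_le_card_neighbors_degree_eq [Fintype V] [DecidableRel G.Adj]
    {H : SimpleGraph V} [DecidableRel H.Adj] (hHG : H ≤ G) (hu : H.degree u < G.degree u)
    (hv : H.degree v < G.degree v) (hH : ∀ c, ¬ (H ⊔ edge u v).IsEdgeColoring n c)
    (hc : H.IsEdgeColoring n c) (hdeg : ∀ x, G.degree x ≤ n) :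
    n - G.degree v + 1 ≤ #{z ∈ G.neighborFinset u | G.degree z = n} := by
  classical
  obtain ⟨α, hα⟩ : (H.missingColors n c u).Nonempty := by
    rw [← card_pos]
    have := H.sub_degree_le_card_missingColors (n := n) (c := c) (x := u)
    have := hdeg u
    omega
  obtain ⟨hαn, huα⟩ := mem_missingColors.mp hα
  have hsum := sum_card_missingColors_fanVertices_le hH hc hαn huα
  set F := H.fanVertices c u v
  have hvF : v ∈ F := mem_fanVertices.mpr ⟨[v], .single⟩
  have hFu : F.erase v ⊆ G.neighborFinset u := fun x hx => by
    obtain ⟨hxv, hxF⟩ := mem_erase.mp hx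
    obtain ⟨P, hP⟩ := mem_fanVertices.mp hxF
    exact (mem_neighborFinset ..).mpr (hHG ((hP.eq_or_adj_of_mem hP.last_mem).resolve_left hxv))
  have hMv : n - G.degree v + 1 ≤ #(H.missingColors n c v) := by
    have := H.sub_degree_le_card_missingColors (n := n) (c := c) (x := v)
    have := hdeg v
    omega
  have hM : #{x ∈ F.erase v | ¬ G.degree x = n} ≤ ∑ x ∈ F.erase v, #(H.missingColors n c x) := by
    rw [card_filter]
    refine sum_le_sum fun x _ => ?_
    have := H.sub_degree_le_card_missingColors (n := n) (c := c) (x := x)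
    have := degree_le_of_le (v := x) hHG
    have := hdeg x
    split_ifs <;> omega
  rw [← add_sum_erase _ _ hvF] at hsum
  have hsplit := card_filter_add_card_filter_not (s := F.erase v) (fun x => G.degree x = n)
  have hsub := card_le_card (filter_subset_filter (fun x => G.degree x = n) hFu)
  omega

end Counting

section DeltaCritical

variable [Fintype V] [DecidableRel G.Adj]

lemma IsDeltaCritical.not_isEdgeColoring (hG : G.IsDeltaCritical) (c : Sym2 V → ℕ) :
    ¬ G.IsEdgeColoring G.maxDegree c := fun hc => by
  have h := (colorable_lineGraph_iff_exists_isEdgeColoring.mpr ⟨c, hc⟩).chromaticNumber_le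
  rw [← chromaticIndex, hG.2.1] at h
  exact absurd h (by norm_cast; omega)

lemma IsDeltaCritical.exists_isEdgeColoring_deleteEdges (hG : G.IsDeltaCritical)
    (huv : G.Adj u v) : ∃ c, (G.deleteEdges {s(u, v)}).IsEdgeColoring G.maxDegree c := by
  rw [← colorable_lineGraph_iff_exists_isEdgeColoring, ← chromaticNumber_le_iff_colorable]
  have h := hG.2.2 _ (G.mem_edgeSet.mpr huv)
  rw [hG.2.1] at h
  exact (ENat.lt_add_one_iff (ENat.natCast_ne_top _)).mp h

end DeltaCritical

end SimpleGraph

theorem vizing_adjacency_lemma_a_general [Fintype V] (G : SimpleGraph V) [DecidableRel G.Adj]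
    (hG : G.IsDeltaCritical) {u v : V} (huv : G.Adj u v) {k : ℕ} (hk : G.degree v = k) :
    G.maxDegree - k + 1 ≤
      ((G.neighborFinset u).filter fun z => G.degree z = G.maxDegree).card := by
  classical
  obtain ⟨c, hc⟩ := hG.exists_isEdgeColoring_deleteEdges huv
  have huv' : s(u, v) ∈ G.edgeSet := huv
  exact hk ▸ sub_degree_add_one_le_card_neighbors_degree_eq (deleteEdges_le _)
    (degree_deleteEdges_lt huv' (Sym2.mem_mk_left u v))
    (degree_deleteEdges_lt huv' (Sym2.mem_mk_right u v))
    (by rw [deleteEdges_sup_edge huv]; exact hG.not_isEdgeColoring) hc G.degree_le_maxDegree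

/-- Vizing's Adjacency Lemma, part (a). -/
theorem vizing_adjacency_lemma_a [Fintype V] (G : SimpleGraph V) [DecidableRel G.Adj]
    (hG : G.IsDeltaCritical) {u v : V} (huv : G.Adj u v) {k : ℕ} (hk : G.degree v = k)
    (hlt : k < G.maxDegree) :
    G.maxDegree - k + 1 ≤
      ((G.neighborFinset u).filter fun z => G.degree z = G.maxDegree).card :=
  vizing_adjacency_lemma_a_general G hG huv hk
end

section
/- (Mader) Every finite simple K5-minor free graph with n ≥ 3 vertices has at most 3n − 6 edges. -/
open SimpleGraph Finset

variable {V : Type*}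

/-!
Mader's argument, run for `K_k` minors with `k ≤ 5`: a graph on `n ≥ k - 2` vertices with at
least `(k - 2) n - C(k - 1, 2) + 1` edges has a `K_k` minor. By induction on `k` and `n`, and
after deleting edges, the edge count is exactly this bound. A vertex of degree `≤ k - 2` can then
be deleted, and an edge in at most `k - 3` triangles contracted, without leaving the bound. Failing
both, if some neighbourhood `N(v)` satisfies the bound for `k - 1`, it carries a `K_(k-1)` minor,
which `v` extends. Otherwise counting triangles through their edges (each edge lies in `≥ k - 2`
of them) and through the neighbourhoods of their vertices gives `C(k-2, 2) n ≤ (k - 4) m`,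
impossible for `k ≤ 5`.
-/

open Function

theorem Fin.pairwise_onFun_cons {α : Type*} {k : ℕ} {r : α → α → Prop}
    (hr : ∀ a b, r a b → r b a) {a : α} {f : Fin k → α} (ha : ∀ i, r a (f i))
    (hf : Pairwise (r on f)) : Pairwise (r on (Fin.cons a f : Fin (k + 1) → α)) := by
  intro i j hij
  cases i using Fin.cases <;> cases j using Fin.cases <;>
    simp only [onFun, Fin.cons_zero, Fin.cons_succ]
  · exact absurd rfl hij
  · exact ha _
  · exact hr _ _ (ha _)
  · exact hf fun h => hij (congrArg _ h)

namespace SimpleGraph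

variable {W : Type*} {G : SimpleGraph V} {H : SimpleGraph W} {k : ℕ}

structure IsCliqueMinorModel (G : SimpleGraph V) (S : Fin k → Set V) : Prop where
  nonempty : ∀ i, (S i).Nonempty
  connected : ∀ i, (G.induce (S i)).Connected
  disjoint : Pairwise (Disjoint on S)
  exists_adj : Pairwise fun i j => ∃ u ∈ S i, ∃ v ∈ S j, G.Adj u v

def HasCliqueMinor (G : SimpleGraph V) (k : ℕ) : Prop :=
  ∃ S : Fin k → Set V, G.IsCliqueMinorModel S

theorem HasCliqueMinor.hasK5Minor (h : G.HasCliqueMinor 5) : G.HasK5Minor :=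
  let ⟨S, hS⟩ := h
  ⟨S, hS.nonempty, hS.connected, fun _ _ hij => hS.disjoint hij,
    fun _ _ hij => hS.exists_adj hij⟩

theorem connected_induce_singleton (v : V) : (G.induce {v}).Connected := by
  rw [induce_singleton_eq_top]
  exact connected_top

theorem Connected.induce_image (f : G →g H) {s : Set V} (hs : (G.induce s).Connected) :
    (H.induce (f '' s)).Connected :=
  hs.map ⟨s.imageFactorization f, f.map_adj⟩ Set.imageFactorization_surjective

/-- `hfib` says that the fibres of `g` are stars centred at the points `σ w`. -/
theorem Connected.induce_preimage_map {g : V → W} {σ : W → V} (hσ : ∀ w, g (σ w) = w)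
    (hfib : ∀ v, σ (g v) = v ∨ G.Adj (σ (g v)) v) {t : Set W}
    (ht : ((G.map g).induce t).Connected) : (G.induce (g ⁻¹' t)).Connected := by
  let lift : t → g ⁻¹' t := fun a => ⟨σ a, by simp [hσ]⟩
  have to_lift : ∀ x : g ⁻¹' t, (G.induce (g ⁻¹' t)).Reachable (lift ⟨g x, x.2⟩) x := by
    rintro ⟨x, hx⟩
    rcases hfib x with h | h
    · rw [show lift ⟨g x, hx⟩ = ⟨x, hx⟩ from Subtype.ext h]
    · exact Adj.reachable (G := G.induce (g ⁻¹' t)) h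
  have lift_adj : ∀ a b : t, ((G.map g).induce t).Adj a b →
      (G.induce (g ⁻¹' t)).Reachable (lift a) (lift b) := by
    rintro ⟨_, ha⟩ ⟨_, hb⟩ ⟨-, a, b, hab, rfl, rfl⟩
    exact (to_lift ⟨a, ha⟩).trans
      ((Adj.reachable (G := G.induce (g ⁻¹' t)) (u := ⟨a, ha⟩) (v := ⟨b, hb⟩) hab).trans
        (to_lift ⟨b, hb⟩).symm)
  have lift_reach : ∀ a b : t, (G.induce (g ⁻¹' t)).Reachable (lift a) (lift b) := by
    intro a b
    simp only [reachable_iff_reflTransGen] at lift_adj ⊢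
    exact Relation.ReflTransGen.lift' lift lift_adj a b
      ((reachable_iff_reflTransGen a b).mp (ht.preconnected a b))
  have : Nonempty t := ht.nonempty
  have : Nonempty (g ⁻¹' t) := ⟨lift (Classical.arbitrary t)⟩
  exact ⟨fun x y => (to_lift x).symm.trans ((lift_reach _ _).trans (to_lift y))⟩

namespace IsCliqueMinorModel

variable {S : Fin k → Set V}

theorem image (hS : G.IsCliqueMinorModel S) (f : G →g H) (hf : Injective f) :
    H.IsCliqueMinorModel fun i => f '' S i where
  nonempty i := (hS.nonempty i).image f
  connected i := (hS.connected i).induce_image f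
  disjoint _ _ hij := (Set.disjoint_image_iff hf).mpr (hS.disjoint hij)
  exists_adj _ _ hij :=
    let ⟨u, hu, v, hv, huv⟩ := hS.exists_adj hij
    ⟨f u, Set.mem_image_of_mem f hu, f v, Set.mem_image_of_mem f hv, f.map_adj huv⟩

theorem preimage_map {g : W → V} {σ : V → W} (hσ : ∀ v, g (σ v) = v)
    (hfib : ∀ w, σ (g w) = w ∨ H.Adj (σ (g w)) w) (hS : (H.map g).IsCliqueMinorModel S) :
    H.IsCliqueMinorModel fun i => g ⁻¹' S i where
  nonempty i :=
    let ⟨v, hv⟩ := hS.nonempty i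
    ⟨σ v, by simpa [hσ] using hv⟩
  connected i := (hS.connected i).induce_preimage_map hσ hfib
  disjoint _ _ hij := (hS.disjoint hij).preimage g
  exists_adj _ _ hij := by
    obtain ⟨_, hu, _, hv, -, a, b, hab, rfl, rfl⟩ := hS.exists_adj hij
    exact ⟨a, hu, b, hv, hab⟩

theorem cons (hS : G.IsCliqueMinorModel S) {v : V} (hv : ∀ i, v ∉ S i)
    (hadj : ∀ i, ∃ u ∈ S i, G.Adj v u) :
    G.IsCliqueMinorModel (Fin.cons {v} S : Fin (k + 1) → Set V) where
  nonempty i := by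
    cases i using Fin.cases
    · exact Set.singleton_nonempty v
    · exact hS.nonempty _
  connected i := by
    cases i using Fin.cases
    · exact connected_induce_singleton v
    · exact hS.connected _
  disjoint := Fin.pairwise_onFun_cons (fun _ _ h => h.symm)
    (fun i => Set.disjoint_singleton_left.mpr (hv i)) hS.disjoint
  exists_adj := Fin.pairwise_onFun_cons (r := fun A B => ∃ u ∈ A, ∃ w ∈ B, G.Adj u w)
    (fun _ _ ⟨u, hu, w, hw, huw⟩ => ⟨w, hw, u, hu, huw.symm⟩)
    (fun i => let ⟨u, hu, hvu⟩ := hadj i; ⟨v, rfl, u, hu, hvu⟩) hS.exists_adj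

end IsCliqueMinorModel

theorem isCliqueMinorModel_top (k : ℕ) :
    (⊤ : SimpleGraph (Fin k)).IsCliqueMinorModel fun i => {i} where
  nonempty i := Set.singleton_nonempty i
  connected i := connected_induce_singleton i
  disjoint _ _ hij := Set.disjoint_singleton.mpr hij
  exists_adj i j hij := ⟨i, rfl, j, rfl, hij⟩

namespace HasCliqueMinor

theorem map (h : G.HasCliqueMinor k) (f : G →g H) (hf : Injective f) : H.HasCliqueMinor k :=
  let ⟨_, hS⟩ := h
  ⟨_, hS.image f hf⟩

theorem mono {G' : SimpleGraph V} (h : G.HasCliqueMinor k) (hle : G ≤ G') :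
    G'.HasCliqueMinor k :=
  h.map (Hom.ofLE hle) injective_id

theorem of_induce {s : Set V} (h : (G.induce s).HasCliqueMinor k) : G.HasCliqueMinor k :=
  h.map (Embedding.induce s).toHom Subtype.val_injective

theorem of_map {g : W → V} {σ : V → W} (hσ : ∀ v, g (σ v) = v)
    (hfib : ∀ w, σ (g w) = w ∨ H.Adj (σ (g w)) w) (h : (H.map g).HasCliqueMinor k) :
    H.HasCliqueMinor k :=
  let ⟨_, hS⟩ := h
  ⟨_, hS.preimage_map hσ hfib⟩

theorem apex {s : Set V} {v : V} (hv : ∀ u ∈ s, G.Adj v u)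
    (h : (G.induce s).HasCliqueMinor k) : G.HasCliqueMinor (k + 1) := by
  obtain ⟨S, hS⟩ := h
  refine ⟨_, (hS.image (Embedding.induce s).toHom Subtype.val_injective).cons (v := v) ?_
    fun i => ?_⟩
  · rintro i ⟨u, -, rfl⟩
    exact (hv u u.2).ne rfl
  · obtain ⟨u, hu⟩ := hS.nonempty i
    exact ⟨u, Set.mem_image_of_mem _ hu, hv u u.2⟩

end HasCliqueMinor

theorem hasCliqueMinor_of_ne_bot (h : G ≠ ⊥) : G.HasCliqueMinor 2 := by
  obtain ⟨f⟩ := (not_cliqueFree_iff_top_isContained 2).mp (mt cliqueFree_two.mp h)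
  exact ⟨_, (isCliqueMinorModel_top 2).image f.toHom f.injective⟩

end SimpleGraph

section mergeInto

variable [DecidableEq V] {x y : V}

/-- `G.map (mergeInto h)` is the contraction of the edge `xy` onto `x`. -/
def mergeInto {x y : V} (hxy : x ≠ y) (v : V) : ({y}ᶜ : Set V) :=
  if h : v = y then ⟨x, hxy⟩ else ⟨v, h⟩

theorem coe_mergeInto (hxy : x ≠ y) (v : V) :
    (mergeInto hxy v : V) = if v = y then x else v := by
  unfold mergeInto
  split_ifs <;> rfl

theorem mergeInto_coe (hxy : x ≠ y) (a : ({y}ᶜ : Set V)) : mergeInto hxy a = a :=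
  Subtype.ext (by rw [coe_mergeInto, if_neg (show (a : V) ≠ y from a.2)])

theorem eq_or_eq_of_mergeInto_eq (hxy : x ≠ y) {a b : V}
    (h : mergeInto hxy a = mergeInto hxy b) : a = b ∨ s(a, b) = s(x, y) := by
  have := congrArg Subtype.val h
  simp only [coe_mergeInto] at this
  split_ifs at this <;> subst_vars <;> simp [Sym2.eq_swap]

end mergeInto

namespace SimpleGraph

variable [DecidableEq V] {G : SimpleGraph V} {k : ℕ} {x y : V}

theorem HasCliqueMinor.of_contract (hxy : G.Adj x y)
    (h : (G.map (mergeInto hxy.ne)).HasCliqueMinor k) : G.HasCliqueMinor k := by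
  refine h.of_map (σ := Subtype.val) (mergeInto_coe hxy.ne) fun v => ?_
  by_cases hv : v = y
  · subst hv
    simpa [coe_mergeInto] using Or.inr hxy
  · simp [coe_mergeInto, hv]

variable [Fintype V] [DecidableRel G.Adj]

/-- Contracting `xy` loses the edge `xy` and, for each common neighbour `z`, one of the two
edges `xz`, `yz`; every other edge is recovered from its image. -/
theorem card_edgeFinset_le_card_edgeFinset_map_mergeInto (hxy : G.Adj x y)
    [DecidableRel (G.map (mergeInto hxy.ne)).Adj] :
    #G.edgeFinset ≤
      #(G.map (mergeInto hxy.ne)).edgeFinset + #(G.neighborFinset x ∩ G.neighborFinset y) + 1 := by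
  set g := mergeInto hxy.ne
  set common := G.neighborFinset x ∩ G.neighborFinset y
  set lost := insert s(x, y) (common.image (s(y, ·)))
  let restore (e : Sym2 ({y}ᶜ : Set V)) : Sym2 V :=
    if e.map (↑) ∈ G.edgeSet then e.map (↑) else (e.map (↑)).map (Equiv.swap x y)
  have hrestore : Set.LeftInvOn restore (Sym2.map g) ↑(G.edgeFinset \ lost) := by
    intro e he
    simp only [coe_sdiff, Set.mem_sdiff, mem_coe, mem_edgeFinset] at he
    simp only [restore, Sym2.map_map, Function.comp_def, coe_mergeInto, g]
    by_cases hye : y ∈ e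
    · obtain ⟨z, rfl⟩ := Sym2.mem_iff_exists.mp hye
      have hzx : z ≠ x := by rintro rfl; exact he.2 (by simp [lost, Sym2.eq_swap])
      have hzy : z ≠ y := (G.ne_of_adj he.1).symm
      have hxz : ¬ G.Adj x z := fun hxz =>
        he.2 (mem_insert_of_mem (mem_image_of_mem _ (by simpa [common, hxz] using he.1)))
      simp [hzy, hxz, Equiv.swap_apply_of_ne_of_ne hzx hzy]
    · have : e.map (fun v => if v = y then x else v) = e := by
        rw [Sym2.map_congr (g := fun v => v) fun v hv => if_neg (ne_of_mem_of_not_mem hv hye),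
          Sym2.map_id']
        rfl
      simp [this, he.1]
  rw [add_assoc]
  refine (card_le_card_sdiff_add_card (t := lost)).trans (add_le_add ?_ ?_)
  · refine card_le_card_of_injOn _ (fun e he => ?_) hrestore.injOn
    have he' := he
    simp only [coe_sdiff, Set.mem_sdiff, mem_coe, mem_edgeFinset] at he' ⊢
    induction e using Sym2.ind with
    | _ a b =>
      rw [Sym2.map_mk, mem_edgeSet]
      refine map_adj_apply' he'.1 fun hab => ?_
      rcases eq_or_eq_of_mergeInto_eq hxy.ne hab with rfl | hab
      · exact G.irrefl he'.1
      · exact he'.2 (hab ▸ mem_insert_self _ _)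
  · exact (card_insert_le _ _).trans (Nat.succ_le_succ card_image_le)

theorem card_edgeFinset_induce_neighborSet (v : V) :
    #(G.induce (G.neighborSet v)).edgeFinset =
      #{e ∈ G.edgeFinset | e ∈ (G.neighborFinset v).sym2} := by
  rw [filter_mem_eq_inter, neighborFinset, ← map_edgeFinset_induce, card_map]

/-- Double counting of triangles: a triangle `vxy` is an edge `xy` of the neighbourhood of `v`. -/
theorem mul_card_edgeFinset_le_sum_card_edgeFinset_induce_neighborSet {t : ℕ}
    (ht : ∀ x y, G.Adj x y → t ≤ #(G.neighborFinset x ∩ G.neighborFinset y)) :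
    t * #G.edgeFinset ≤ ∑ v, #(G.induce (G.neighborSet v)).edgeFinset := by
  let r (v : V) (e : Sym2 V) : Prop := e ∈ (G.neighborFinset v).sym2
  calc t * #G.edgeFinset = ∑ _e ∈ G.edgeFinset, t := by rw [sum_const, smul_eq_mul, mul_comm]
    _ ≤ ∑ e ∈ G.edgeFinset, #(univ.bipartiteBelow r e) := sum_le_sum fun e he => ?_
    _ = ∑ v, #(G.edgeFinset.bipartiteAbove r v) :=
      (sum_card_bipartiteAbove_eq_sum_card_bipartiteBelow r).symm
    _ = ∑ v, #(G.induce (G.neighborSet v)).edgeFinset := by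
      simp_rw [card_edgeFinset_induce_neighborSet]; rfl
  induction e using Sym2.ind with
  | _ x y =>
    refine (ht x y (mem_edgeFinset.mp he)).trans (card_le_card fun z hz => ?_)
    simp only [mem_inter, mem_neighborFinset] at hz
    simp [r, bipartiteBelow, mem_sym2_iff, hz.1.symm, hz.2.symm]

theorem exists_le_card_edgeFinset_induce_neighborSet [Nonempty V] {j : ℕ} (hj : j ≤ 2)
    (hm : (j + 1) * Fintype.card V + 1 = #G.edgeFinset + (j + 2).choose 2)
    (htri : ∀ x y, G.Adj x y → j + 1 ≤ #(G.neighborFinset x ∩ G.neighborFinset y)) :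
    ∃ v, j * G.degree v + 1 ≤ #(G.induce (G.neighborSet v)).edgeFinset + (j + 1).choose 2 := by
  by_contra! hsparse
  have htri := mul_card_edgeFinset_le_sum_card_edgeFinset_induce_neighborSet htri
  have hsum : ∑ v, (#(G.induce (G.neighborSet v)).edgeFinset + (j + 1).choose 2) ≤
      ∑ v, j * G.degree v :=
    sum_le_sum fun v _ => Nat.le_of_lt_succ (hsparse v)
  rw [sum_add_distrib, ← mul_sum, sum_degrees_eq_twice_card_edges, sum_const, card_univ,
    smul_eq_mul] at hsum
  have key : (j + 1) * #G.edgeFinset + (j + 1).choose 2 * Fintype.card V ≤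
      2 * j * #G.edgeFinset := by
    linarith
  have := Fintype.card_pos (α := V)
  interval_cases j <;> simp only [Nat.choose_two_right] at key hm <;> omega

universe u

/-- Mader's bound `m ≥ j n - C(j+1, 2) + 1` forces a `K_(j+2)` minor (the binomial is moved
across to avoid truncated subtraction). -/
def ManyEdgesForceCliqueMinor (j : ℕ) : Prop :=
  ∀ (A : Type u) [Fintype A] [DecidableEq A] (G : SimpleGraph A) [DecidableRel G.Adj],
    j ≤ Fintype.card A → j * Fintype.card A + 1 ≤ #G.edgeFinset + (j + 1).choose 2 →
      G.HasCliqueMinor (j + 2)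

theorem manyEdgesForceCliqueMinor_zero : ManyEdgesForceCliqueMinor.{u} 0 := by
  intro A _ _ G _ _ hm
  refine hasCliqueMinor_of_ne_bot fun hG => ?_
  subst hG
  simp at hm

namespace ManyEdgesForceCliqueMinor

variable {j : ℕ} {A : Type u} [Fintype A] [DecidableEq A]

theorem hasCliqueMinor_of_card_edgeFinset_eq (hj : j ≤ 2) (hK : ManyEdgesForceCliqueMinor.{u} j)
    (G : SimpleGraph A) [DecidableRel G.Adj]
    (ih : ∀ (B : Type u) [Fintype B] [DecidableEq B] (H : SimpleGraph B) [DecidableRel H.Adj],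
      Fintype.card B < Fintype.card A → j + 1 ≤ Fintype.card B →
        (j + 1) * Fintype.card B + 1 ≤ #H.edgeFinset + (j + 2).choose 2 → H.HasCliqueMinor (j + 3))
    (hn : j + 1 ≤ Fintype.card A)
    (hm : (j + 1) * Fintype.card A + 1 = #G.edgeFinset + (j + 2).choose 2) :
    G.HasCliqueMinor (j + 3) := by
  have hn : j + 2 ≤ Fintype.card A := by
    refine (Nat.eq_or_lt_of_le hn).resolve_left fun h => ?_
    have := G.card_edgeFinset_le_card_choose_two
    rw [← h] at this hm
    have : (j + 1) * (j + 1) < (j + 1).choose 2 + (j + 2).choose 2 := by omega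
    interval_cases j <;> simp [Nat.choose] at this
  have hshrink : (j + 1) * (Fintype.card A - 1) + (j + 1) = (j + 1) * Fintype.card A := by
    rw [← Nat.mul_add_one, Nat.sub_add_cancel (by omega)]
  by_cases hdel : ∃ v, G.degree v ≤ j + 1
  · obtain ⟨v, hv⟩ := hdel
    have hcard := card_edgeFinset_induce_compl_singleton G v
    rw [card_edgeFinset_deleteIncidenceSet] at hcard
    have := G.degree_le_card_edgeFinset v
    refine HasCliqueMinor.of_induce (ih _ (G.induce {v}ᶜ) ?_ ?_ ?_) <;>
      rw [Fintype.card_compl_set, Set.card_singleton] <;> omega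
  push Not at hdel
  by_cases hcon : ∃ x y, ∃ hxy : G.Adj x y, #(G.neighborFinset x ∩ G.neighborFinset y) ≤ j
  · obtain ⟨x, y, hxy, hxy'⟩ := hcon
    have hcard := card_edgeFinset_le_card_edgeFinset_map_mergeInto hxy
    refine HasCliqueMinor.of_contract hxy (ih _ _ ?_ ?_ ?_) <;>
      rw [Fintype.card_compl_set, Set.card_singleton] <;> omega
  push Not at hcon
  have : Nonempty A := Fintype.card_pos_iff.mp (by omega)
  obtain ⟨v, hv⟩ := exists_le_card_edgeFinset_induce_neighborSet hj hm hcon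
  rw [← card_neighborSet_eq_degree] at hv
  exact (hK _ _ (by rw [card_neighborSet_eq_degree]; linarith [hdel v]) hv).apex fun _ h => h

theorem succ (hj : j ≤ 2) (hK : ManyEdgesForceCliqueMinor.{u} j) :
    ManyEdgesForceCliqueMinor.{u} (j + 1) := by
  suffices ∀ n (A : Type u) [Fintype A] [DecidableEq A] (G : SimpleGraph A) [DecidableRel G.Adj],
      Fintype.card A = n → j + 1 ≤ n → (j + 1) * n + 1 ≤ #G.edgeFinset + (j + 2).choose 2 →
        G.HasCliqueMinor (j + 3) from
    fun A _ _ G _ => this _ A G rfl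
  intro n
  induction n using Nat.strong_induction_on with
  | _ n ih =>
    rintro A _ _ G _ rfl hn hm
    obtain ⟨F, hF, hFcard⟩ := exists_subset_card_eq
      (show #G.edgeFinset - ((j + 1) * Fintype.card A + 1 - (j + 2).choose 2) ≤ #G.edgeFinset
        from Nat.sub_le _ _)
    refine (hasCliqueMinor_of_card_edgeFinset_eq hj hK (G.deleteEdges F)
      (fun B _ _ H _ hB => ih _ hB B H rfl) hn ?_).mono (G.deleteEdges_le _)
    have hC : (j + 2).choose 2 ≤ (j + 1) * (j + 1) + 1 := by interval_cases j <;> decide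
    have := Nat.mul_le_mul_left (j + 1) hn
    rw [edgeFinset_deleteEdges, card_sdiff_of_subset hF]
    omega

end ManyEdgesForceCliqueMinor

theorem manyEdgesForceCliqueMinor_three : ManyEdgesForceCliqueMinor.{u} 3 :=
  ((manyEdgesForceCliqueMinor_zero.succ (by norm_num)).succ (by norm_num)).succ (by norm_num)

end SimpleGraph

/-- Mader: every finite simple `K₅`-minor free graph on `n ≥ 3` vertices has at most
`3n - 6` edges. -/
theorem k5_minor_free_edge_bound [Fintype V] [DecidableEq V] (G : SimpleGraph V)
    [DecidableRel G.Adj] (hK5 : ¬ G.HasK5Minor) (hn : 3 ≤ Fintype.card V) :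
    G.edgeFinset.card ≤ 3 * Fintype.card V - 6 := by
  by_contra! hm
  exact hK5 (manyEdgesForceCliqueMinor_three V G hn (by rw [Nat.choose_two_right]; omega)).hasK5Minor
end
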